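/- Lemma 3: Let m ≥ 2, let I and J be finite types, and let A : Fin m → ((Fin m → I) → ℂ) and B : Fin m → ((Fin m → J) → ℂ) be uncorrelated m-tuples of order-m cubic hypermatrices. Then the m-tuple of direct sums (A t ⊕ B t)_{t : Fin m} is an uncorrelated m-tuple over the index type I ⊕ J, and the m-tuple of Kronecker products (A t ⊗ B t)_{t : Fin m} is an uncorrelated m-tuple over the index type I × J. -/

import Mathlib

/-- The BM product of an `m`-tuple of order-`m` cubic hypermatrices over index type `I`. -/
noncomputable def bmProd {m : ℕ} [NeZero m] {I : Type*} [Fintype I] [DecidableEq I]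
    (A : Fin m → ((Fin m → I) → ℂ)) : (Fin m → I) → ℂ :=
  fun i => ∑ j : I, ∏ t : Fin m, A t (Function.update i (t + 1) j)

/-- The Kronecker delta hypermatrix. -/
noncomputable def hDelta {m : ℕ} {I : Type*} [DecidableEq I] : (Fin m → I) → ℂ :=
  fun i => if ∀ s t : Fin m, i s = i t then 1 else 0

open Classical in
/-- The direct sum of order-`m` hypermatrices: `(A ⊕ B)(inl ∘ a) = A a`,
`(A ⊕ B)(inr ∘ b) = B b`, and `0` on mixed indices. -/
noncomputable def hDirectSum {m : ℕ} {I J : Type*}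
    (A : (Fin m → I) → ℂ) (B : (Fin m → J) → ℂ) : (Fin m → I ⊕ J) → ℂ := fun i =>
  if h : ∃ a : Fin m → I, i = Sum.inl ∘ a then A h.choose
  else if h' : ∃ b : Fin m → J, i = Sum.inr ∘ b then B h'.choose
  else 0

/-- The Kronecker product of order-`m` hypermatrices over `I` and `J`. -/
noncomputable def hKron {m : ℕ} {I J : Type*}
    (A : (Fin m → I) → ℂ) (B : (Fin m → J) → ℂ) : (Fin m → I × J) → ℂ :=
  fun i => A (fun t => (i t).1) * B (fun t => (i t).2)

/-! For the Kronecker product, the BM sum over `I × J` factors as the product of the BM sums over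
`I` and over `J`, and `Δ` factors in the same way. For the direct sum, replacing one coordinate of
a block index `inl ∘ a` by a `J`-index gives a mixed index in some factor (here a second
coordinate, hence `m ≥ 2`, is needed), where the direct sum vanishes; so at `inl ∘ a` only the
`A`-block contributes. At a mixed index every term of the BM sum has a mixed factor. -/

theorem Fin.zero_ne_one_of_two_le {m : ℕ} [NeZero m] (hm : 2 ≤ m) : (0 : Fin m) ≠ 1 := by
  intro h
  have := congrArg Fin.val h
  rw [Fin.val_zero, Fin.val_one', Nat.mod_eq_of_lt (by omega)] at this
  omega

theorem Sum.exists_comp_inl_or_comp_inr_or_mixed {ι α β : Type*} (i : ι → α ⊕ β) :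
    (∃ a, i = Sum.inl ∘ a) ∨ (∃ b, i = Sum.inr ∘ b) ∨
      ∃ s t x y, i s = Sum.inl x ∧ i t = Sum.inr y := by
  by_cases hl : ∀ s, (i s).isLeft
  · exact .inl ⟨fun s => (i s).getLeft (hl s), funext fun s => (Sum.inl_getLeft _ _).symm⟩
  by_cases hr : ∀ s, (i s).isRight
  · exact .inr (.inl ⟨fun s => (i s).getRight (hr s), funext fun s => (Sum.inr_getRight _ _).symm⟩)
  push Not at hl hr
  obtain ⟨t, ht⟩ := hl
  obtain ⟨s, hs⟩ := hr
  obtain ⟨x, hx⟩ := Sum.isLeft_iff.mp (Sum.not_isRight.mp hs)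
  obtain ⟨y, hy⟩ := Sum.isRight_iff.mp (Sum.not_isLeft.mp ht)
  exact .inr (.inr ⟨s, t, x, y, hx, hy⟩)

section Delta

variable {m : ℕ} {I J : Type*} [DecidableEq I] [DecidableEq J]

theorem hDelta_comp_of_injective {f : I → J} (hf : f.Injective) (a : Fin m → I) :
    hDelta (f ∘ a) = hDelta a := by
  simp only [hDelta, Function.comp_apply, hf.eq_iff]

theorem hDelta_eq_zero_of_ne {i : Fin m → I} {s t : Fin m} (h : i s ≠ i t) : hDelta i = 0 :=
  if_neg fun hc => h (hc s t)

theorem hDelta_prod (i : Fin m → I × J) :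
    hDelta i = hDelta (fun s => (i s).1) * hDelta (fun s => (i s).2) := by
  simp only [hDelta, ite_zero_mul_ite_zero, one_mul, Prod.ext_iff, ← forall_and]

end Delta

section DirectSum

variable {m : ℕ} {I J : Type*}

theorem hDirectSum_comp_inl (A : (Fin m → I) → ℂ) (B : (Fin m → J) → ℂ) (a : Fin m → I) :
    hDirectSum A B (Sum.inl ∘ a) = A a := by
  have h : ∃ a', (Sum.inl ∘ a : Fin m → I ⊕ J) = Sum.inl ∘ a' := ⟨a, rfl⟩
  rw [hDirectSum, dif_pos h]
  exact congrArg A (Sum.inl_injective.comp_left h.choose_spec).symm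

theorem hDirectSum_comp_inr [NeZero m] (A : (Fin m → I) → ℂ) (B : (Fin m → J) → ℂ) (b : Fin m → J) :
    hDirectSum A B (Sum.inr ∘ b) = B b := by
  have hl : ¬∃ a, (Sum.inr ∘ b : Fin m → I ⊕ J) = Sum.inl ∘ a := fun ⟨_, ha⟩ =>
    Sum.inr_ne_inl (congrFun ha 0)
  have h : ∃ b', (Sum.inr ∘ b : Fin m → I ⊕ J) = Sum.inr ∘ b' := ⟨b, rfl⟩
  rw [hDirectSum, dif_neg hl, dif_pos h]
  exact congrArg B (Sum.inr_injective.comp_left h.choose_spec).symm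

theorem hDirectSum_eq_zero_of_mixed (A : (Fin m → I) → ℂ) (B : (Fin m → J) → ℂ)
    {i : Fin m → I ⊕ J} {s t : Fin m} {x : I} {y : J}
    (hx : i s = Sum.inl x) (hy : i t = Sum.inr y) : hDirectSum A B i = 0 := by
  rw [hDirectSum, dif_neg, dif_neg]
  · rintro ⟨b, rfl⟩
    exact Sum.inr_ne_inl hx
  · rintro ⟨a, rfl⟩
    exact Sum.inl_ne_inr hy

variable [NeZero m] [Fintype I] [DecidableEq I] [Fintype J] [DecidableEq J]
  (A : Fin m → ((Fin m → I) → ℂ)) (B : Fin m → ((Fin m → J) → ℂ))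

theorem bmProd_hDirectSum_comp_inl (hm : 2 ≤ m) (a : Fin m → I) :
    bmProd (fun t => hDirectSum (A t) (B t)) (Sum.inl ∘ a) = bmProd A a := by
  have hmixed (j : J) : ∏ t : Fin m,
      hDirectSum (A t) (B t) (Function.update (Sum.inl ∘ a) (t + 1) (Sum.inr j)) = 0 := by
    refine Finset.prod_eq_zero (Finset.mem_univ 0)
      (hDirectSum_eq_zero_of_mixed _ _ (s := 0) (t := 0 + 1) (x := a 0) (y := j) ?_ ?_)
    · rw [zero_add]
      exact Function.update_of_ne (Fin.zero_ne_one_of_two_le hm) _ _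
    · exact Function.update_self ..
  simp only [bmProd, Fintype.sum_sum_type, hmixed, Finset.sum_const_zero, add_zero,
    ← Function.comp_update, hDirectSum_comp_inl]

theorem bmProd_hDirectSum_comp_inr (hm : 2 ≤ m) (b : Fin m → J) :
    bmProd (fun t => hDirectSum (A t) (B t)) (Sum.inr ∘ b) = bmProd B b := by
  have hmixed (j : I) : ∏ t : Fin m,
      hDirectSum (A t) (B t) (Function.update (Sum.inr ∘ b) (t + 1) (Sum.inl j)) = 0 := by
    refine Finset.prod_eq_zero (Finset.mem_univ 0)
      (hDirectSum_eq_zero_of_mixed _ _ (s := 0 + 1) (t := 0) (x := j) (y := b 0) ?_ ?_)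
    · exact Function.update_self ..
    · rw [zero_add]
      exact Function.update_of_ne (Fin.zero_ne_one_of_two_le hm) _ _
  simp only [bmProd, Fintype.sum_sum_type, hmixed, Finset.sum_const_zero, zero_add,
    ← Function.comp_update, hDirectSum_comp_inr]

theorem bmProd_hDirectSum_eq_zero_of_mixed {i : Fin m → I ⊕ J} {s t : Fin m} {x : I} {y : J}
    (hx : i s = Sum.inl x) (hy : i t = Sum.inr y) :
    bmProd (fun t => hDirectSum (A t) (B t)) i = 0 := by
  have hst : s ≠ t := fun h => Sum.inl_ne_inr (hx.symm.trans (h ▸ hy))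
  refine Finset.sum_eq_zero fun j _ => ?_
  rcases j with j | j
  · refine Finset.prod_eq_zero (Finset.mem_univ (s - 1)) ?_
    rw [sub_add_cancel]
    exact hDirectSum_eq_zero_of_mixed _ _ (Function.update_self ..)
      ((Function.update_of_ne hst.symm _ _).trans hy)
  · refine Finset.prod_eq_zero (Finset.mem_univ (t - 1)) ?_
    rw [sub_add_cancel]
    exact hDirectSum_eq_zero_of_mixed _ _ ((Function.update_of_ne hst _ _).trans hx)
      (Function.update_self ..)

end DirectSum

theorem bmProd_hKron {m : ℕ} [NeZero m] {I J : Type*} [Fintype I] [DecidableEq I] [Fintype J]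
    [DecidableEq J] (A : Fin m → ((Fin m → I) → ℂ)) (B : Fin m → ((Fin m → J) → ℂ))
    (i : Fin m → I × J) :
    bmProd (fun t => hKron (A t) (B t)) i =
      bmProd A (fun s => (i s).1) * bmProd B (fun s => (i s).2) := by
  simp only [bmProd, hKron, Finset.sum_mul_sum, Fintype.sum_prod_type, ← Finset.prod_mul_distrib]
  congr! 4
  · exact congrArg (A _) (Function.comp_update Prod.fst i _ _)
  · exact congrArg (B _) (Function.comp_update Prod.snd i _ _)

/-- Lemma 3: direct sums and Kronecker products of uncorrelated tuples are uncorrelated. -/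
theorem uncorrelated_directSum_and_kron {m : ℕ} [NeZero m] (hm : 2 ≤ m)
    {I J : Type*} [Fintype I] [DecidableEq I] [Fintype J] [DecidableEq J]
    (A : Fin m → ((Fin m → I) → ℂ)) (B : Fin m → ((Fin m → J) → ℂ))
    (hA : bmProd A = hDelta) (hB : bmProd B = hDelta) :
    bmProd (fun t => hDirectSum (A t) (B t)) = hDelta ∧
    bmProd (fun t => hKron (A t) (B t)) = hDelta := by
  refine ⟨funext fun i => ?_, funext fun i => ?_⟩
  · rcases Sum.exists_comp_inl_or_comp_inr_or_mixed i with
      ⟨a, rfl⟩ | ⟨b, rfl⟩ | ⟨s, t, x, y, hx, hy⟩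
    · rw [bmProd_hDirectSum_comp_inl A B hm, hA, hDelta_comp_of_injective Sum.inl_injective]
    · rw [bmProd_hDirectSum_comp_inr A B hm, hB, hDelta_comp_of_injective Sum.inr_injective]
    · rw [bmProd_hDirectSum_eq_zero_of_mixed A B hx hy,
        hDelta_eq_zero_of_ne (hx.trans_ne (hy ▸ Sum.inl_ne_inr))]
  · rw [bmProd_hKron, hA, hB, hDelta_prod]
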